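/- For every integer n ≥ 2 and every symmetric convex body K ⊂ ℝⁿ there is a rotation U ∈ SO(n) such that R_k(U K) ⊆ 3·R_{k-1}(U K) for every k ∈ {2, …, n}. -/

import Mathlib

open Set Pointwise

/-- The coordinate subspace `F(S) = span {e_j : j ∈ S}` of `ℝⁿ`, as a set. -/
noncomputable def coordSubspace {n : ℕ} (S : Finset (Fin n)) :
    Set (EuclideanSpace ℝ (Fin n)) :=
  ↑(Submodule.span ℝ ((fun j => EuclideanSpace.single j (1 : ℝ)) '' (S : Set (Fin n))))

/-- The `k`-cross approximation of a set `K ⊆ ℝⁿ`. -/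
noncomputable def kCross (n k : ℕ) (K : Set (EuclideanSpace ℝ (Fin n))) :
    Set (EuclideanSpace ℝ (Fin n)) :=
  convexHull ℝ (K ∩ ⋃ S ∈ {S : Finset (Fin n) | S.card = k}, coordSubspace S)

/-!
Choose an orthonormal basis `v₀, …, v₍ₙ₋₁₎` greedily: `vⱼ` points to a farthest point `p` of
the slice of `K` orthogonal to `v₀, …, vⱼ₋₁`. Every `y` in that slice has `|⟪vⱼ, y⟫| ≤ ‖y‖ ≤ ‖p‖`,
so, `K` being balanced, its projection `⟪vⱼ, y⟫ • vⱼ` lies in `K`. This survives sign changes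
of the `vⱼ`, so we may orient the basis positively and let the rotation `U` send `vⱼ` to `eⱼ`.
A point `x ∈ UK` supported on `S`, `#S = k`, with `j = min S`, has `xᵢ = 0` for `i < j`, hence
`z = xⱼ eⱼ ∈ UK`, and `y = (x - z) / 2 ∈ UK` by symmetry and convexity. As `z` is supported on
`{j}` and `y` on `S \ {j}`, both lie in `R_{k-1}(UK)`, and `x = 3 • (2/3 • y + 1/3 • z)`.
-/

open Module
open scoped RealInnerProductSpace

section Flag

variable {E : Type*} [NormedAddCommGroup E] [InnerProductSpace ℝ E]

def IsLeadingProjectionStable {ι : Type*} [LinearOrder ι] (K : Set E) (v : ι → E) : Prop :=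
  ∀ j, ∀ y ∈ K, (∀ i < j, ⟪v i, y⟫ = 0) → ⟪v j, y⟫ • v j ∈ K

theorem IsLeadingProjectionStable.of_eq_or_eq_neg {ι : Type*} [LinearOrder ι] {K : Set E}
    {v w : ι → E} (hv : IsLeadingProjectionStable K v) (hw : ∀ i, w i = v i ∨ w i = -v i) :
    IsLeadingProjectionStable K w := by
  have hinner : ∀ i y, ⟪w i, y⟫ = ⟪v i, y⟫ ∨ ⟪w i, y⟫ = -⟪v i, y⟫ := fun i y => by
    rcases hw i with h | h <;> simp [h]
  have hproj : ∀ i y, ⟪w i, y⟫ • w i = ⟪v i, y⟫ • v i := fun i y => by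
    rcases hw i with h | h <;> simp [h]
  intro j y hy hyw
  rw [hproj]
  refine hv j y hy fun i hi => ?_
  rcases hinner i y with h | h <;> simpa [h] using hyw i hi

theorem IsLeadingProjectionStable.image {F : Type*} [NormedAddCommGroup F] [InnerProductSpace ℝ F]
    {ι : Type*} [LinearOrder ι] {K : Set E} {v : ι → E} (hv : IsLeadingProjectionStable K v)
    (U : E ≃ₗᵢ[ℝ] F) : IsLeadingProjectionStable (U '' K) (U ∘ v) := by
  rintro j _ ⟨y, hy, rfl⟩ hyv
  simp only [Function.comp_apply, LinearIsometryEquiv.inner_map_map] at hyv ⊢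
  exact ⟨_, hv j y hy hyv, map_smul U _ _⟩

theorem exists_norm_eq_one_inner_smul_mem {K : Set E} (hK : IsCompact K) (hKb : Balanced ℝ K)
    {W : Submodule ℝ E} (hW : IsClosed (W : Set E)) (hW0 : W ≠ ⊥) :
    ∃ u ∈ W, ‖u‖ = 1 ∧ ∀ y ∈ K, y ∈ W → ⟪u, y⟫ • u ∈ K := by
  obtain ⟨u₀, hu₀W, hu₀⟩ : ∃ u ∈ W, ‖u‖ = 1 := by
    obtain ⟨w, hwW, hw0⟩ := W.exists_mem_ne_zero_of_ne_bot hW0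
    exact ⟨‖w‖⁻¹ • w, W.smul_mem _ hwW, norm_smul_inv_norm hw0⟩
  rcases (K ∩ W).eq_empty_or_nonempty with hKW | hKW
  · exact ⟨u₀, hu₀W, hu₀, fun y hy hyW => (hKW.subset ⟨hy, hyW⟩).elim⟩
  obtain ⟨p, ⟨hpK, hpW⟩, hmax⟩ :=
    (hK.inter_right hW).exists_isMaxOn hKW continuous_norm.continuousOn
  obtain ⟨u, huW, hu, hpu⟩ : ∃ u ∈ W, ‖u‖ = 1 ∧ p = ‖p‖ • u := by
    rcases eq_or_ne p 0 with rfl | hp0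
    · exact ⟨u₀, hu₀W, hu₀, by simp⟩
    · refine ⟨‖p‖⁻¹ • p, W.smul_mem _ hpW, norm_smul_inv_norm hp0, ?_⟩
      rw [smul_smul, mul_inv_cancel₀ (norm_ne_zero_iff.mpr hp0), one_smul]
  refine ⟨u, huW, hu, fun y hy hyW => ?_⟩
  have hyp : |⟪u, y⟫| ≤ ‖p‖ := calc
    |⟪u, y⟫| ≤ ‖u‖ * ‖y‖ := abs_real_inner_le_norm u y
    _ ≤ ‖p‖ := by rw [hu, one_mul]; exact hmax ⟨hy, hyW⟩
  have hproj : ⟪u, y⟫ • u = (⟪u, y⟫ / ‖p‖) • p := by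
    rcases eq_or_ne ‖p‖ 0 with hp | hp
    · have : ⟪u, y⟫ = 0 := abs_nonpos_iff.mp (hp ▸ hyp)
      simp [this]
    · calc ⟪u, y⟫ • u = (⟪u, y⟫ / ‖p‖) • (‖p‖ • u) := by rw [smul_smul, div_mul_cancel₀ _ hp]
        _ = (⟪u, y⟫ / ‖p‖) • p := by rw [← hpu]
  rw [hproj]
  refine hKb.smul_mem ?_ hpK
  rw [Real.norm_eq_abs, abs_div, abs_norm]
  exact div_le_one_of_le₀ hyp (norm_nonneg p)

theorem Orthonormal.fin_cons {d : ℕ} {u : E} {v : Fin d → E} (hv : Orthonormal ℝ v)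
    (hu : ‖u‖ = 1) (hvu : ∀ i, ⟪u, v i⟫ = 0) : Orthonormal ℝ (Fin.cons u v : Fin (d + 1) → E) := by
  refine ⟨fun i => ?_, fun i j hij => ?_⟩
  · cases i using Fin.cases <;> simp [hu, hv.1]
  · cases i using Fin.cases <;> cases j using Fin.cases
    · exact absurd rfl hij
    · simpa using hvu _
    · simpa [real_inner_comm] using hvu _
    · simpa using hv.2 fun h => hij (congrArg Fin.succ h)

variable [FiniteDimensional ℝ E]

theorem exists_orthonormal_isLeadingProjectionStable_inter {K : Set E} (hK : IsCompact K)
    (hKb : Balanced ℝ K) {d : ℕ} {W : Submodule ℝ E} (hW : finrank ℝ W = d) :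
    ∃ v : Fin d → E, Orthonormal ℝ v ∧ (∀ i, v i ∈ W) ∧
      IsLeadingProjectionStable (K ∩ W) v := by
  induction d generalizing W with
  | zero =>
    exact ⟨Fin.elim0, ⟨fun i => i.elim0, fun i => i.elim0⟩, fun i => i.elim0, fun i => i.elim0⟩
  | succ d ih =>
    obtain ⟨u, huW, hu, huK⟩ := exists_norm_eq_one_inner_smul_mem hK hKb
      W.closed_of_finiteDimensional (Submodule.one_le_finrank_iff.mp (by omega))
    have hW' : finrank ℝ ((ℝ ∙ u)ᗮ ⊓ W : Submodule ℝ E) = d := by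
      have := Submodule.finrank_add_inf_finrank_orthogonal
        ((Submodule.span_singleton_le_iff_mem u W).mpr huW)
      rw [finrank_span_singleton (norm_ne_zero_iff.mp (hu ▸ one_ne_zero)), hW] at this
      omega
    obtain ⟨v, hv, hvW', hvK⟩ := ih hW'
    have hvu : ∀ i, ⟪u, v i⟫ = 0 := fun i =>
      Submodule.inner_right_of_mem_orthogonal (Submodule.mem_span_singleton_self u) (hvW' i).1
    refine ⟨Fin.cons u v, hv.fin_cons hu hvu, fun i => ?_, fun j y ⟨hyK, hyW⟩ hy => ?_⟩
    · cases i using Fin.cases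
      · simpa using huW
      · simpa using (hvW' _).2
    · cases j using Fin.cases with
      | zero => exact ⟨huK y hyK hyW, W.smul_mem _ huW⟩
      | succ j =>
        have hyu : y ∈ (ℝ ∙ u)ᗮ := by
          simpa [Submodule.mem_orthogonal_singleton_iff_inner_right] using hy 0 (Fin.succ_pos j)
        have := hvK j y ⟨hyK, hyu, hyW⟩ fun i hi => by
          simpa using hy i.succ (Fin.succ_lt_succ_iff.mpr hi)
        simpa using ⟨this.1, this.2.2⟩

theorem exists_orthonormalBasis_isLeadingProjectionStable {n : ℕ} [Nonempty (Fin n)] {K : Set E}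
    (hK : IsCompact K) (hKb : Balanced ℝ K) (hn : finrank ℝ E = n) :
    ∃ b : OrthonormalBasis (Fin n) ℝ E, IsLeadingProjectionStable K b := by
  obtain ⟨v, hv, -, hvK⟩ := exists_orthonormal_isLeadingProjectionStable_inter hK hKb
    (W := ⊤) (by rw [finrank_top, hn])
  refine ⟨(basisOfOrthonormalOfCardEqFinrank hv (by simp [hn])).toOrthonormalBasis ?_, ?_⟩
  · simpa using hv
  · simpa using hvK

end Flag

theorem OrthonormalBasis.det_repr_eq_one {ι : Type*} [Fintype ι] [DecidableEq ι]
    (b : OrthonormalBasis ι ℝ (EuclideanSpace ℝ ι))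
    (hb : b.toBasis.orientation = (EuclideanSpace.basisFun ι ℝ).toBasis.orientation) :
    LinearMap.det (b.repr.toLinearEquiv : EuclideanSpace ℝ ι →ₗ[ℝ] EuclideanSpace ℝ ι) = 1 := by
  have h := (EuclideanSpace.basisFun ι ℝ).toBasis.det_comp b.repr.toLinearEquiv.toLinearMap b
  have hrepr : b.repr.toLinearEquiv.toLinearMap ∘ b = (EuclideanSpace.basisFun ι ℝ).toBasis := by
    ext i : 1; simp
  have hdet := (EuclideanSpace.basisFun ι ℝ).det_to_matrix_orthonormalBasis_of_same_orientation b
    hb.symm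
  rw [hrepr, Basis.det_self, hdet, mul_one] at h
  exact h.symm

theorem mem_coordSubspace_iff {n : ℕ} {S : Finset (Fin n)} {x : EuclideanSpace ℝ (Fin n)} :
    x ∈ coordSubspace S ↔ ∀ j ∉ S, x j = 0 := by
  have := (EuclideanSpace.basisFun (Fin n) ℝ).toBasis.mem_span_image (m := x) (s := S)
  simp only [OrthonormalBasis.coe_toBasis, EuclideanSpace.basisFun_apply] at this
  rw [coordSubspace, SetLike.mem_coe, this]
  simp [Set.subset_def, not_imp_comm]

theorem inter_coordSubspace_subset_kCross {n k : ℕ} {T : Finset (Fin n)} (hT : T.card ≤ k)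
    (hk : k ≤ n) (L : Set (EuclideanSpace ℝ (Fin n))) :
    L ∩ coordSubspace T ⊆ kCross n k L := by
  obtain ⟨S, hTS, -, hS⟩ := Finset.exists_subsuperset_card_eq (Finset.subset_univ T) hT
    (by simpa using hk)
  refine (Set.inter_subset_inter_right L ?_).trans (subset_convexHull ℝ _)
  refine subset_trans ?_ (Set.subset_biUnion_of_mem (u := coordSubspace)
    (show S ∈ {S : Finset (Fin n) | S.card = k} from hS))
  exact Submodule.span_mono (Set.image_mono (by simpa using hTS))

theorem kCross_subset_three_smul {n k : ℕ} {L : Set (EuclideanSpace ℝ (Fin n))}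
    (hconv : Convex ℝ L) (hneg : ∀ x ∈ L, -x ∈ L)
    (hL : IsLeadingProjectionStable L fun i => EuclideanSpace.single i (1 : ℝ))
    (hk : 2 ≤ k) (hkn : k ≤ n) :
    kCross n k L ⊆ (3 : ℝ) • kCross n (k - 1) L := by
  have hA : Convex ℝ (kCross n (k - 1) L) := convex_convexHull ℝ _
  refine convexHull_min ?_ (hA.smul 3)
  rintro x ⟨hxL, hx⟩
  obtain ⟨S, hSk : S.card = k, hxS⟩ := Set.mem_iUnion₂.mp hx
  rw [mem_coordSubspace_iff] at hxS
  have hS : S.Nonempty := Finset.card_pos.mp (by omega)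
  set j := S.min' hS
  set z := x j • EuclideanSpace.single j (1 : ℝ)
  set y := (1 / 2 : ℝ) • (x - z)
  have hzL : z ∈ L := by
    simpa [EuclideanSpace.inner_single_left] using hL j x hxL fun i hi => by
      simpa [EuclideanSpace.inner_single_left] using
        hxS i fun hiS => (S.min'_le i hiS).not_gt hi
  have hyL : y ∈ L := by
    simpa [y, sub_eq_add_neg, smul_add] using
      hconv hxL (hneg z hzL) (by norm_num : (0 : ℝ) ≤ 1 / 2) (by norm_num : (0 : ℝ) ≤ 1 / 2)
        (by norm_num)
  have hzA : z ∈ kCross n (k - 1) L :=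
    inter_coordSubspace_subset_kCross (T := {j}) (by simp; omega) (by omega) L
      ⟨hzL, mem_coordSubspace_iff.mpr fun i hi => by simp_all [z]⟩
  have hyA : y ∈ kCross n (k - 1) L :=
    inter_coordSubspace_subset_kCross (T := S.erase j)
      (by rw [Finset.card_erase_of_mem (S.min'_mem hS), hSk]) (by omega) L
      ⟨hyL, mem_coordSubspace_iff.mpr fun i hi => by
        by_cases hij : i = j
        · simp [y, z, hij]
        · simp [y, z, hij, hxS i (by simpa [hij] using hi)]⟩
  refine ⟨(2 / 3 : ℝ) • y + (1 / 3 : ℝ) • z,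
    hA hyA hzA (by norm_num) (by norm_num) (by norm_num), ?_⟩
  simp only [y]
  module

theorem stmt_9_general (n : ℕ) (hn : 2 ≤ n) (K : Set (EuclideanSpace ℝ (Fin n)))
    (hKcomp : IsCompact K) (hKconv : Convex ℝ K) (hKsym : K = -K) :
    ∃ U : EuclideanSpace ℝ (Fin n) ≃ₗᵢ[ℝ] EuclideanSpace ℝ (Fin n),
      LinearMap.det (U.toLinearEquiv : EuclideanSpace ℝ (Fin n) →ₗ[ℝ]
        EuclideanSpace ℝ (Fin n)) = 1 ∧
      ∀ k : ℕ, 2 ≤ k → k ≤ n →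
        kCross n k (⇑U '' K) ⊆ (3 : ℝ) • kCross n (k - 1) (⇑U '' K) := by
  have : Nonempty (Fin n) := ⟨⟨0, by omega⟩⟩
  have hneg : ∀ x ∈ K, -x ∈ K := fun x hx => by rwa [hKsym, Set.neg_mem_neg]
  obtain ⟨b₀, hb₀⟩ := exists_orthonormalBasis_isLeadingProjectionStable hKcomp
    ((balanced_iff_neg_mem hKconv).mpr hneg) (finrank_euclideanSpace_fin (𝕜 := ℝ))
  set b := b₀.adjustToOrientation (EuclideanSpace.basisFun (Fin n) ℝ).toBasis.orientation
  have hb : IsLeadingProjectionStable K b :=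
    hb₀.of_eq_or_eq_neg (b₀.adjustToOrientation_apply_eq_or_eq_neg _)
  refine ⟨b.repr, b.det_repr_eq_one (b₀.orientation_adjustToOrientation _), fun k hk hkn => ?_⟩
  refine kCross_subset_three_smul (hKconv.linear_image b.repr.toLinearEquiv.toLinearMap)
    ?_ ?_ hk hkn
  · rintro _ ⟨x, hx, rfl⟩
    exact ⟨-x, hneg x hx, map_neg _ _⟩
  · simpa [Function.comp_def] using hb.image b.repr

/-- For every `n ≥ 2` and every symmetric convex body `K ⊆ ℝⁿ` there is `U ∈ SO(n)` such
that `R_k(UK) ⊆ 3 • R_{k-1}(UK)` for every `k ∈ {2, …, n}`. -/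
theorem stmt_9 (n : ℕ) (hn : 2 ≤ n) (K : Set (EuclideanSpace ℝ (Fin n)))
    (hKcomp : IsCompact K) (hKconv : Convex ℝ K) (hKint : (interior K).Nonempty)
    (hKsym : K = -K) :
    ∃ U : EuclideanSpace ℝ (Fin n) ≃ₗᵢ[ℝ] EuclideanSpace ℝ (Fin n),
      LinearMap.det (U.toLinearEquiv : EuclideanSpace ℝ (Fin n) →ₗ[ℝ]
        EuclideanSpace ℝ (Fin n)) = 1 ∧
      ∀ k : ℕ, 2 ≤ k → k ≤ n →
        kCross n k (⇑U '' K) ⊆ (3 : ℝ) • kCross n (k - 1) (⇑U '' K) :=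
  stmt_9_general n hn K hKcomp hKconv hKsym
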